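/- arXiv:0801.1195 — 2 statements merged into one kernel-verified Lean document; each statement's English description precedes it below -/
import Mathlib

section
/- Let a, b ≥ 1 be integers, N = 2^a·3^b, n ≥ 1, and i_1, …, i_n ∈ {0, …, N−1}. Set C = Σ_{j=1}^{n} i_j N^{j−1}. Then the forward atom is a single coset rectangle: ⋂_{j=1}^{n} {rep(N^j·y) : y ∈ A_{i_j}} = [0,1) × (2^{an}ℤ₂ − C) × (3^{bn}ℤ₃ − C), where 2^{an}ℤ₂ − C = {2^{an}z − C : z ∈ ℤ₂} and similarly for ℤ₃. -/
/-!
An element of `Γ` whose `p`-adic coordinates lie in `ℤ₂ × ℤ₃` is `Δ m` with `m ∈ ℤ`, since a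
number in `ℤ[1/6]` that is integral at 2 and at 3 is an integer. Hence `rep` sends `N^{j+1} • y`
to `N^{j+1} • y - Δ m` with `m = ⌊N^{j+1} y₁⌋`, and `rep (N^{j+1} • A_k)` is the union over the
integers `m ∈ [k N^j, (k+1) N^j)` of the coset rectangles
`[0,1) × (N^{j+1}ℤ₂ - m) × (N^{j+1}ℤ₃ - m)`. As `N` has no prime factors besides 2 and 3, two
rectangles of modulus `N^{j+1}` with offsets `m`, `m'` meet only if `N^{j+1} ∣ m - m'`.
Intersecting over `j = 0, 1, …` therefore forces the offsets to be the partial sums of the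
base-`N` expansion `Σ i_j N^j`, one new digit at a time.
-/

open Set

noncomputable section

/-- The ambient group `G = ℝ × ℚ₂ × ℚ₃`. -/
abbrev G : Type := ℝ × ℚ_[2] × ℚ_[3]

/-- The diagonal embedding of `ℚ` into `G`. -/
def Δ (r : ℚ) : G := ((r : ℝ), (r : ℚ_[2]), (r : ℚ_[3]))

/-- `ℤ[1/6]`, the rationals expressible with denominator `6^k`. -/
def zInv6 : Set ℚ := {q | ∃ (z : ℤ) (k : ℕ), q = z / 6 ^ k}

/-- `Γ = Δ(ℤ[1/6])`. -/
def Γ : Set G := Δ '' zInv6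

/-- The fundamental domain `F = [0,1) × ℤ₂ × ℤ₃`. -/
def F : Set G := {x | x.1 ∈ Set.Ico (0 : ℝ) 1 ∧ ‖x.2.1‖ ≤ 1 ∧ ‖x.2.2‖ ≤ 1}

/-- Coordinatewise multiplication by a rational on `G`. -/
def act (q : ℚ) (x : G) : G :=
  ((q : ℝ) * x.1, (q : ℚ_[2]) * x.2.1, (q : ℚ_[3]) * x.2.2)

/-- The atom `A_k = [k/N, (k+1)/N) × ℤ₂ × ℤ₃` of the partition `ξ`. -/
def A (N k : ℕ) : Set G :=
  {x | x.1 ∈ Set.Ico ((k : ℝ) / N) (((k : ℝ) + 1) / N) ∧ ‖x.2.1‖ ≤ 1 ∧ ‖x.2.2‖ ≤ 1}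

lemma IsUltrametricDist.norm_sub_le_of_norm_le {E : Type*} [SeminormedAddCommGroup E]
    [IsUltrametricDist E] {x y : E} {r : ℝ} (hx : ‖x‖ ≤ r) (hy : ‖y‖ ≤ r) : ‖x - y‖ ≤ r := by
  rw [sub_eq_add_neg]
  exact (IsUltrametricDist.norm_add_le_max x (-y)).trans (max_le hx (by rwa [norm_neg]))

namespace Padic

variable {p q : ℕ} [Fact p.Prime] [Fact q.Prime]

lemma norm_intCast_le_norm_of_dvd {M d : ℤ} (h : M ∣ d) :
    ‖(d : ℚ_[p])‖ ≤ ‖(M : ℚ_[p])‖ := by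
  obtain ⟨c, rfl⟩ := h
  rw [Int.cast_mul, norm_mul]
  exact mul_le_of_le_one_right (norm_nonneg _) (norm_int_le_one c)

lemma norm_intCast_le_norm_p_pow_iff (d : ℤ) (α : ℕ) :
    ‖(d : ℚ_[p])‖ ≤ ‖(p : ℚ_[p]) ^ α‖ ↔ (p : ℤ) ^ α ∣ d := by
  rw [norm_p_pow, norm_int_le_pow_iff_dvd]

lemma norm_natCast_pow_mul_pow (hpq : p ≠ q) (α β : ℕ) :
    ‖((p ^ α * q ^ β : ℕ) : ℚ_[p])‖ = ‖(p : ℚ_[p]) ^ α‖ := by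
  have hq : ‖(q : ℚ_[p])‖ = 1 :=
    norm_natCast_eq_one_iff.2 ((Nat.coprime_primes Fact.out Fact.out).2 hpq)
  push_cast
  rw [norm_mul, norm_pow (q : ℚ_[p]), hq, one_pow, mul_one]

lemma pow_mul_pow_dvd_of_norm_le (hpq : p ≠ q) {d : ℤ} {α β : ℕ}
    (hdp : ‖(d : ℚ_[p])‖ ≤ ‖((p ^ α * q ^ β : ℕ) : ℚ_[p])‖)
    (hdq : ‖(d : ℚ_[q])‖ ≤ ‖((p ^ α * q ^ β : ℕ) : ℚ_[q])‖) :
    ((p ^ α * q ^ β : ℕ) : ℤ) ∣ d := by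
  rw [norm_natCast_pow_mul_pow hpq, norm_intCast_le_norm_p_pow_iff] at hdp
  rw [mul_comm, norm_natCast_pow_mul_pow hpq.symm, norm_intCast_le_norm_p_pow_iff] at hdq
  have hcop : IsCoprime (p : ℤ) q :=
    Nat.isCoprime_iff_coprime.2 ((Nat.coprime_primes Fact.out Fact.out).2 hpq)
  push_cast
  exact (hcop.pow).mul_dvd hdp hdq

end Padic

lemma norm_mul_le_norm_iff {K : Type*} [NormedDivisionRing K] {c y : K} (hc : c ≠ 0) :
    ‖c * y‖ ≤ ‖c‖ ↔ ‖y‖ ≤ 1 := by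
  rw [norm_mul, mul_le_iff_le_one_right (norm_pos_iff.2 hc)]

lemma exists_norm_le_one_eq_mul_sub_iff {K : Type*} [NormedField K] {c : K} (hc : c ≠ 0)
    (x d : K) : (∃ z : K, ‖z‖ ≤ 1 ∧ x = c * z - d) ↔ ‖x + d‖ ≤ ‖c‖ := by
  constructor
  · rintro ⟨z, hz, rfl⟩
    rwa [sub_add_cancel, norm_mul_le_norm_iff hc]
  · intro h
    refine ⟨(x + d) / c, ?_, by field_simp; ring⟩
    rwa [← norm_mul_le_norm_iff hc, mul_div_cancel₀ _ hc]

lemma Δ_sub (q r : ℚ) : Δ (q - r) = Δ q - Δ r := by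
  simp [Δ]

lemma Δ_intCast_mem_Γ (m : ℤ) : Δ m ∈ Γ := ⟨m, ⟨m, 0, by simp⟩, rfl⟩

lemma sub_mem_zInv6 {q r : ℚ} (hq : q ∈ zInv6) (hr : r ∈ zInv6) : q - r ∈ zInv6 := by
  obtain ⟨z, k, rfl⟩ := hq
  obtain ⟨w, l, rfl⟩ := hr
  refine ⟨z * 6 ^ l - w * 6 ^ k, k + l, ?_⟩
  field_simp
  push_cast
  ring

lemma sub_mem_Γ {x y : G} (hx : x ∈ Γ) (hy : y ∈ Γ) : x - y ∈ Γ := by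
  obtain ⟨q, hq, rfl⟩ := hx
  obtain ⟨r, hr, rfl⟩ := hy
  exact ⟨q - r, sub_mem_zInv6 hq hr, Δ_sub q r⟩

lemma exists_intCast_eq_of_mem_zInv6 {q : ℚ} (hq : q ∈ zInv6) (h2 : ‖(q : ℚ_[2])‖ ≤ 1)
    (h3 : ‖(q : ℚ_[3])‖ ≤ 1) : ∃ m : ℤ, q = m := by
  obtain ⟨z, k, rfl⟩ := hq
  have hz : ∀ (p : ℕ) [Fact p.Prime], ‖((z / 6 ^ k : ℚ) : ℚ_[p])‖ ≤ 1 →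
      ‖(z : ℚ_[p])‖ ≤ ‖((2 ^ k * 3 ^ k : ℕ) : ℚ_[p])‖ := by
    intro p _ h
    have : (z : ℚ_[p]) = ((z / 6 ^ k : ℚ) : ℚ_[p]) * ((2 ^ k * 3 ^ k : ℕ) : ℚ_[p]) := by
      rw [← mul_pow]; push_cast; field_simp
    rw [this, norm_mul]
    exact mul_le_of_le_one_left (norm_nonneg _) h
  obtain ⟨m, hm⟩ := Padic.pow_mul_pow_dvd_of_norm_le (by norm_num) (hz 2 h2) (hz 3 h3)
  refine ⟨m, ?_⟩
  rw [hm, ← mul_pow]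
  push_cast
  field_simp

lemma exists_intCast_eq_Δ_of_mem_Γ {g : G} (hg : g ∈ Γ) (h2 : ‖g.2.1‖ ≤ 1) (h3 : ‖g.2.2‖ ≤ 1) :
    ∃ m : ℤ, g = Δ m := by
  obtain ⟨q, hq, rfl⟩ := hg
  obtain ⟨m, rfl⟩ := exists_intCast_eq_of_mem_zInv6 hq h2 h3
  exact ⟨m, rfl⟩

open IsUltrametricDist in
lemma exists_intCast_eq_Δ_of_sub_mem_Γ {x y : G} (h : x - y ∈ Γ) (hx : x ∈ F) (hy : y ∈ F) :
    ∃ m : ℤ, x - y = Δ m :=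
  exists_intCast_eq_Δ_of_mem_Γ h (norm_sub_le_of_norm_le hx.2.1 hy.2.1)
    (norm_sub_le_of_norm_le hx.2.2 hy.2.2)

lemma intCast_add_mem_Ico_iff {A B m : ℤ} {t : ℝ} (ht : t ∈ Ico (0 : ℝ) 1) :
    t + m ∈ Ico (A : ℝ) B ↔ m ∈ Ico A B := by
  have hfloor : ⌊t + m⌋ = m := by
    rw [Int.floor_add_intCast, Int.floor_eq_zero_iff.2 ht, zero_add]
  rw [mem_Ico, mem_Ico, ← Int.le_floor, ← Int.floor_lt, hfloor]

lemma pow_succ_mul_mem_Ico_iff {N : ℕ} (hN : 0 < N) (j k : ℕ) (s : ℝ) :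
    (N : ℝ) ^ (j + 1) * s ∈ Ico ((k : ℝ) * N ^ j) ((k + 1) * N ^ j) ↔
      s ∈ Ico ((k : ℝ) / N) ((k + 1) / N) := by
  have hpos : (0 : ℝ) < (N : ℝ) ^ (j + 1) := by positivity
  have e : ∀ c : ℝ, c * N ^ j = N ^ (j + 1) * (c / N) := fun c => by field_simp; ring
  rw [e, e, mem_Ico, mem_Ico, mul_le_mul_iff_right₀ hpos, mul_lt_mul_iff_right₀ hpos]

lemma act_act_inv {q : ℚ} (hq : q ≠ 0) (x : G) : act q (act q⁻¹ x) = x := by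
  simp [act, hq]

lemma act_eq_add_Δ_iff {q : ℚ} {y u : G} {m : ℤ} :
    act q y = u + Δ m ↔
      (q : ℝ) * y.1 = u.1 + m ∧ (q : ℚ_[2]) * y.2.1 = u.2.1 + m ∧
        (q : ℚ_[3]) * y.2.2 = u.2.2 + m := by
  simp [act, Δ, Prod.ext_iff]

/-- The coset rectangle `[0,1) × (Mℤ₂ - c) × (Mℤ₃ - c)`. -/
def cosetRect (M : ℕ) (c : ℤ) : Set G :=
  {u | u ∈ F ∧ ‖u.2.1 + c‖ ≤ ‖(M : ℚ_[2])‖ ∧ ‖u.2.2 + c‖ ≤ ‖(M : ℚ_[3])‖}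

open IsUltrametricDist in
lemma cosetRect_subset {M M' : ℕ} {c c' : ℤ} (hM : M ∣ M') (hc : (M : ℤ) ∣ c' - c) :
    cosetRect M' c' ⊆ cosetRect M c := by
  rintro u ⟨hF, h2, h3⟩
  have hM' : (M : ℤ) ∣ M' := Int.natCast_dvd_natCast.2 hM
  have key : ∀ (p : ℕ) [Fact p.Prime] (v : ℚ_[p]), ‖v + c'‖ ≤ ‖(M' : ℚ_[p])‖ →
      ‖v + c‖ ≤ ‖(M : ℚ_[p])‖ := by
    intro p _ v hv
    have hMM : ‖(M' : ℚ_[p])‖ ≤ ‖(M : ℚ_[p])‖ := by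
      exact_mod_cast Padic.norm_intCast_le_norm_of_dvd hM'
    have : v + c = (v + c') - ((c' - c : ℤ) : ℚ_[p]) := by push_cast; ring
    rw [this]
    exact norm_sub_le_of_norm_le (hv.trans hMM) (Padic.norm_intCast_le_norm_of_dvd hc)
  exact ⟨hF, key 2 _ h2, key 3 _ h3⟩

open IsUltrametricDist in
lemma dvd_sub_of_mem_cosetRect {a b N k : ℕ} (hN : N = 2 ^ a * 3 ^ b) {c c' : ℤ} {u : G}
    (h : u ∈ cosetRect (N ^ k) c) (h' : u ∈ cosetRect (N ^ k) c') : (N : ℤ) ^ k ∣ c - c' := by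
  have hNk : N ^ k = 2 ^ (a * k) * 3 ^ (b * k) := by rw [hN, mul_pow, ← pow_mul, ← pow_mul]
  rw [hNk] at h h'
  have key : ∀ (p : ℕ) [Fact p.Prime] (v : ℚ_[p]) (r : ℝ), ‖v + c‖ ≤ r → ‖v + c'‖ ≤ r →
      ‖((c - c' : ℤ) : ℚ_[p])‖ ≤ r := by
    intro p _ v r hc hc'
    have : ((c - c' : ℤ) : ℚ_[p]) = (v + c) - (v + c') := by push_cast; ring
    rw [this]
    exact norm_sub_le_of_norm_le hc hc'
  have := Padic.pow_mul_pow_dvd_of_norm_le (by norm_num) (key 2 _ _ h.2.1 h'.2.1)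
    (key 3 _ _ h.2.2 h'.2.2)
  rwa [← hNk, Nat.cast_pow] at this

lemma Int.eq_add_mul_of_dvd_sub {P C m k : ℤ} (hC : C ∈ Ico 0 P)
    (hm : m ∈ Ico (k * P) ((k + 1) * P)) (hd : P ∣ m - C) : m = C + k * P := by
  obtain ⟨t, ht⟩ := hd
  obtain ⟨hC0, hCP⟩ := hC
  obtain ⟨hlo, hhi⟩ := hm
  have h1 : k < t + 1 := by nlinarith
  have h2 : t < k + 1 := by nlinarith
  have : t = k := by omega
  subst this
  linarith

lemma sum_mul_pow_lt {N : ℕ} : ∀ {n : ℕ} (i : Fin n → ℕ), (∀ j, i j < N) →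
    ∑ j : Fin n, i j * N ^ (j : ℕ) < N ^ n
  | 0, _, _ => by simp
  | n + 1, i, hi => by
    rw [Fin.sum_univ_castSucc, pow_succ]
    have ih := sum_mul_pow_lt (fun j => i j.castSucc) (fun j => hi _)
    have hlast : (i (Fin.last n) + 1) * N ^ n ≤ N ^ n * N := by
      rw [mul_comm (N ^ n)]
      exact Nat.mul_le_mul_right _ (hi _)
    simp only [Fin.val_castSucc, Fin.val_last] at ih ⊢
    linarith

open IsUltrametricDist in
lemma mem_cosetRect_pow_iff {a b N : ℕ} (hN : N = 2 ^ a * 3 ^ b) (n C : ℕ) (u : G) :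
    u ∈ cosetRect (N ^ n) C ↔ u.1 ∈ Ico (0 : ℝ) 1 ∧
      (∃ z : ℚ_[2], ‖z‖ ≤ 1 ∧ u.2.1 = 2 ^ (a * n) * z - (C : ℚ_[2])) ∧
      (∃ w : ℚ_[3], ‖w‖ ≤ 1 ∧ u.2.2 = 3 ^ (b * n) * w - (C : ℚ_[3])) := by
  have hNn : N ^ n = 2 ^ (a * n) * 3 ^ (b * n) := by rw [hN, mul_pow, ← pow_mul, ← pow_mul]
  have h2 : ‖((N ^ n : ℕ) : ℚ_[2])‖ = ‖(2 : ℚ_[2]) ^ (a * n)‖ := by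
    rw [hNn, Padic.norm_natCast_pow_mul_pow (by norm_num)]; norm_num
  have h3 : ‖((N ^ n : ℕ) : ℚ_[3])‖ = ‖(3 : ℚ_[3]) ^ (b * n)‖ := by
    rw [hNn, mul_comm, Padic.norm_natCast_pow_mul_pow (by norm_num)]; norm_num
  rw [exists_norm_le_one_eq_mul_sub_iff (pow_ne_zero _ two_ne_zero),
    exists_norm_le_one_eq_mul_sub_iff (pow_ne_zero _ three_ne_zero), ← h2, ← h3]
  simp only [cosetRect, F, mem_ofPred_eq, Int.cast_natCast]
  constructor
  · rintro ⟨⟨hu1, -, -⟩, hu2, hu3⟩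
    exact ⟨hu1, hu2, hu3⟩
  · rintro ⟨hu1, hu2, hu3⟩
    refine ⟨⟨hu1, ?_, ?_⟩, hu2, hu3⟩
    · simpa using norm_sub_le_of_norm_le (hu2.trans (norm_natCast_le_one _ _))
        (norm_natCast_le_one ℚ_[2] C)
    · simpa using norm_sub_le_of_norm_le (hu3.trans (norm_natCast_le_one _ _))
        (norm_natCast_le_one ℚ_[3] C)

def IsRepMap (rep : G → G) : Prop := ∀ x : G, rep x ∈ F ∧ x - rep x ∈ Γ

namespace IsRepMap

variable {rep : G → G} {a b N : ℕ}

lemma eq_of_sub_mem_Γ (hrep : IsRepMap rep) {x u : G} (hu : u ∈ F) (hx : x - u ∈ Γ) :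
    rep x = u := by
  obtain ⟨hF, hΓ⟩ := hrep x
  have hdiff : rep x - u ∈ Γ := by simpa using sub_mem_Γ hx hΓ
  obtain ⟨m, hm⟩ := exists_intCast_eq_Δ_of_sub_mem_Γ hdiff hF hu
  have hm0 : m = 0 := by
    have h1 : (rep x).1 - u.1 = m := by simpa [Δ] using congrArg Prod.fst hm
    have : -1 < (m : ℝ) ∧ (m : ℝ) < 1 := by
      obtain ⟨⟨_, _⟩, _⟩ := hF; obtain ⟨⟨_, _⟩, _⟩ := hu; constructor <;> linarith
    have : -1 < m ∧ m < 1 := by exact_mod_cast this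
    omega
  subst hm0
  exact sub_eq_zero.1 (by simpa [Δ, Prod.zero_eq_mk] using hm)

open IsUltrametricDist in
lemma exists_mem_cosetRect_of_mem_A (hrep : IsRepMap rep) (hN : 0 < N) (j : ℕ) {k : ℕ} {y : G}
    (hy : y ∈ A N k) :
    ∃ m : ℤ, m ∈ Ico ((k : ℤ) * N ^ j) ((k + 1) * N ^ j) ∧
      rep (act ((N : ℚ) ^ (j + 1)) y) ∈ cosetRect (N ^ (j + 1)) m := by
  obtain ⟨hy1, hy2, hy3⟩ := hy
  obtain ⟨hF, hΓ⟩ := hrep (act ((N : ℚ) ^ (j + 1)) y)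
  have hM2 : (N : ℚ_[2]) ^ (j + 1) ≠ 0 := pow_ne_zero _ (Nat.cast_ne_zero.2 hN.ne')
  have hM3 : (N : ℚ_[3]) ^ (j + 1) ≠ 0 := pow_ne_zero _ (Nat.cast_ne_zero.2 hN.ne')
  have hx2 : ‖(N : ℚ_[2]) ^ (j + 1) * y.2.1‖ ≤ ‖((N ^ (j + 1) : ℕ) : ℚ_[2])‖ := by
    exact_mod_cast (norm_mul_le_norm_iff hM2).2 hy2
  have hx3 : ‖(N : ℚ_[3]) ^ (j + 1) * y.2.2‖ ≤ ‖((N ^ (j + 1) : ℕ) : ℚ_[3])‖ := by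
    exact_mod_cast (norm_mul_le_norm_iff hM3).2 hy3
  obtain ⟨m, hm⟩ := exists_intCast_eq_Δ_of_mem_Γ hΓ
    (norm_sub_le_of_norm_le (by simpa [act] using hx2.trans (norm_natCast_le_one _ _)) hF.2.1)
    (norm_sub_le_of_norm_le (by simpa [act] using hx3.trans (norm_natCast_le_one _ _)) hF.2.2)
  obtain ⟨h1, h2, h3⟩ := act_eq_add_Δ_iff.1 (eq_add_of_sub_eq' hm)
  push_cast at h1 h2 h3
  refine ⟨m, ?_, hF, by rwa [← h2], by rwa [← h3]⟩
  rw [← intCast_add_mem_Ico_iff hF.1]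
  push_cast
  rw [← h1]
  exact (pow_succ_mul_mem_Ico_iff hN j k _).2 hy1

lemma mem_image_A_of_mem_cosetRect (hrep : IsRepMap rep) (hN : 0 < N) {j k : ℕ} {m : ℤ} {u : G}
    (hm : m ∈ Ico ((k : ℤ) * N ^ j) ((k + 1) * N ^ j)) (hu : u ∈ cosetRect (N ^ (j + 1)) m) :
    u ∈ (fun y => rep (act ((N : ℚ) ^ (j + 1)) y)) '' A N k := by
  have hq : ((N : ℚ) ^ (j + 1)) ≠ 0 := by positivity
  obtain ⟨y, hy⟩ : ∃ y, act ((N : ℚ) ^ (j + 1)) y = u + Δ m := ⟨_, act_act_inv hq _⟩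
  obtain ⟨hy1, hy2, hy3⟩ := act_eq_add_Δ_iff.1 hy
  push_cast at hy1 hy2 hy3
  refine ⟨y, ⟨?_, ?_, ?_⟩, ?_⟩
  · rw [← pow_succ_mul_mem_Ico_iff hN, hy1]
    exact_mod_cast (intCast_add_mem_Ico_iff hu.1.1).2 hm
  · rw [← norm_mul_le_norm_iff (pow_ne_zero _ (Nat.cast_ne_zero.2 hN.ne')), hy2]
    exact_mod_cast hu.2.1
  · rw [← norm_mul_le_norm_iff (pow_ne_zero _ (Nat.cast_ne_zero.2 hN.ne')), hy3]
    exact_mod_cast hu.2.2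
  · dsimp only
    rw [hy]
    exact hrep.eq_of_sub_mem_Γ hu.1 (by rw [add_sub_cancel_left]; exact Δ_intCast_mem_Γ m)

lemma mem_image_act_A_iff (hrep : IsRepMap rep) (hN : 0 < N) (j k : ℕ) (u : G) :
    u ∈ (fun y => rep (act ((N : ℚ) ^ (j + 1)) y)) '' A N k ↔
      ∃ m : ℤ, m ∈ Ico ((k : ℤ) * N ^ j) ((k + 1) * N ^ j) ∧ u ∈ cosetRect (N ^ (j + 1)) m := by
  constructor
  · rintro ⟨y, hy, rfl⟩
    exact hrep.exists_mem_cosetRect_of_mem_A hN j hy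
  · rintro ⟨m, hm, hu⟩
    exact hrep.mem_image_A_of_mem_cosetRect hN hm hu

lemma cosetRect_inter_image_eq (hrep : IsRepMap rep) (hN : N = 2 ^ a * 3 ^ b) (n k C : ℕ)
    (hC : C < N ^ n) :
    cosetRect (N ^ n) C ∩ (fun y => rep (act ((N : ℚ) ^ (n + 1)) y)) '' A N k =
      cosetRect (N ^ (n + 1)) (C + k * N ^ n : ℕ) := by
  have hN0 : 0 < N := by rw [hN]; positivity
  have hCI : (C : ℤ) ∈ Ico 0 ((N : ℤ) ^ n) := ⟨by positivity, by exact_mod_cast hC⟩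
  ext u
  rw [mem_inter_iff, hrep.mem_image_act_A_iff hN0]
  constructor
  · rintro ⟨hu, m, hm, hu'⟩
    have hd := dvd_sub_of_mem_cosetRect hN
      (cosetRect_subset (c := m) (pow_dvd_pow N n.le_succ) (by simp) hu') hu
    rw [Int.eq_add_mul_of_dvd_sub hCI hm hd] at hu'
    exact_mod_cast hu'
  · intro hu
    refine ⟨cosetRect_subset (pow_dvd_pow N n.le_succ) ⟨k, by push_cast; ring⟩ hu,
      C + k * N ^ n, ⟨?_, ?_⟩, by exact_mod_cast hu⟩
    · linarith [hCI.1]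
    · linarith [hCI.2]

lemma inter_iInter_image_eq (hrep : IsRepMap rep) (hN : N = 2 ^ a * 3 ^ b) :
    ∀ (n : ℕ) (i : Fin n → ℕ), (∀ j, i j < N) →
      F ∩ ⋂ j : Fin n, (fun y => rep (act ((N : ℚ) ^ ((j : ℕ) + 1)) y)) '' A N (i j) =
        cosetRect (N ^ n) (∑ j : Fin n, i j * N ^ (j : ℕ) : ℕ)
  | 0, _, _ => by
    ext u
    simp [cosetRect, F]
  | n + 1, i, hi => by
    have hsplit : ∀ s : Fin (n + 1) → Set G,
        ⋂ j, s j = (⋂ j : Fin n, s j.castSucc) ∩ s (Fin.last n) := by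
      intro s; ext; simp [Fin.forall_fin_succ']
    have ih := inter_iInter_image_eq hrep hN n (fun j => i j.castSucc) (fun j => hi _)
    rw [hsplit, ← inter_assoc, Fin.sum_univ_castSucc]
    simp only [Fin.val_castSucc, Fin.val_last] at ih ⊢
    rw [ih]
    exact cosetRect_inter_image_eq hrep hN n _ _ (sum_mul_pow_lt _ (fun j => hi _))

end IsRepMap

theorem forward_atom_general (rep : G → G) (hrep : ∀ x : G, rep x ∈ F ∧ x - rep x ∈ Γ)
    (a b : ℕ) (N : ℕ) (hN : N = 2 ^ a * 3 ^ b)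
    (n : ℕ) (hn : 1 ≤ n) (i : Fin n → ℕ) (hi : ∀ j, i j < N) :
    (⋂ j : Fin n, (fun y => rep (act ((N : ℚ) ^ ((j : ℕ) + 1)) y)) '' A N (i j)) =
      {u : G | u.1 ∈ Set.Ico (0 : ℝ) 1 ∧
        (∃ z : ℚ_[2], ‖z‖ ≤ 1 ∧
          u.2.1 = 2 ^ (a * n) * z - ((∑ j : Fin n, i j * N ^ (j : ℕ) : ℕ) : ℚ_[2])) ∧
        (∃ w : ℚ_[3], ‖w‖ ≤ 1 ∧
          u.2.2 = 3 ^ (b * n) * w - ((∑ j : Fin n, i j * N ^ (j : ℕ) : ℕ) : ℚ_[3]))} := by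
  have hsub : (⋂ j : Fin n, (fun y => rep (act ((N : ℚ) ^ ((j : ℕ) + 1)) y)) '' A N (i j)) ⊆ F :=
    (iInter_subset _ ⟨0, hn⟩).trans (image_subset_iff.2 fun y _ => (hrep _).1)
  rw [← inter_eq_right.2 hsub, IsRepMap.inter_iInter_image_eq hrep hN n i hi]
  ext u
  exact mem_cosetRect_pow_iff hN n _ u

/-- A forward atom `⋂_{j=1}^n α^j(A_{i_j})` is a single coset rectangle
`[0,1) × (2^{an}ℤ₂ - C) × (3^{bn}ℤ₃ - C)` with `C = Σ_{j=1}^n i_j N^{j-1}`;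
here `i (j : Fin n)` denotes the index `i_{j+1}`. -/
theorem forward_atom (rep : G → G) (hrep : ∀ x : G, rep x ∈ F ∧ x - rep x ∈ Γ)
    (a b : ℕ) (ha : 1 ≤ a) (hb : 1 ≤ b) (N : ℕ) (hN : N = 2 ^ a * 3 ^ b)
    (n : ℕ) (hn : 1 ≤ n) (i : Fin n → ℕ) (hi : ∀ j, i j < N) :
    (⋂ j : Fin n, (fun y => rep (act ((N : ℚ) ^ ((j : ℕ) + 1)) y)) '' A N (i j)) =
      {u : G | u.1 ∈ Set.Ico (0 : ℝ) 1 ∧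
        (∃ z : ℚ_[2], ‖z‖ ≤ 1 ∧
          u.2.1 = 2 ^ (a * n) * z - ((∑ j : Fin n, i j * N ^ (j : ℕ) : ℕ) : ℚ_[2])) ∧
        (∃ w : ℚ_[3], ‖w‖ ≤ 1 ∧
          u.2.2 = 3 ^ (b * n) * w - ((∑ j : Fin n, i j * N ^ (j : ℕ) : ℕ) : ℚ_[3]))} :=
  forward_atom_general rep hrep a b N hN n hn i hi
end
end

section
/- Let a, b ≥ 1 be integers, N = 2^a·3^b, n ≥ 1, and i_0, i_1, …, i_n ∈ {0, …, N−1}. Set D = Σ_{j=0}^{n} i_j / N^{j+1}. Then the backward atom is a single rectangle: {x ∈ F : rep(N^j·x) ∈ A_{i_j} for all 0 ≤ j ≤ n} = [D, D + 1/N^{n+1}) × ℤ₂ × ℤ₃. -/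
/-! For `x ∈ F` the `p`-adic coordinates of `y = act (N ^ j) x` stay in `ℤ_p`, so the element of `Γ`
carrying `y` into `F` is an integer, and the real coordinate of `rep y` is `fract (N ^ j x₁)`.
The conditions thus say that the first `n + 1` base-`N` digits of `x₁ ∈ [0, 1)` are `i₀, …, iₙ`,
which cuts out `[D, D + N⁻⁽ⁿ⁺¹⁾)`; induction on `n` peels off the leading digit via
`x ↦ N x - i₀`. -/

open Set

noncomputable section

theorem Nat.forall_le_succ_left {n : ℕ} {p : ℕ → Prop} :
    (∀ j ≤ n + 1, p j) ↔ p 0 ∧ ∀ j ≤ n, p (j + 1) := by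
  simpa only [Nat.lt_succ_iff] using Nat.forall_lt_succ_left (n := n + 1) (p := p)

lemma mem_Ico_mul_sub_iff {c : ℝ} (hc : 0 < c) (a u v x : ℝ) :
    c * x - a ∈ Ico u v ↔ x ∈ Ico ((a + u) / c) ((a + v) / c) := by
  simp only [mem_Ico, div_le_iff₀ hc, lt_div_iff₀ hc]
  constructor <;> rintro ⟨h₁, h₂⟩ <;> constructor <;> linarith

lemma fract_pow_succ_mul (N j k : ℕ) (x : ℝ) :
    Int.fract ((N : ℝ) ^ (j + 1) * x) = Int.fract ((N : ℝ) ^ j * (N * x - k)) := by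
  rw [← Int.fract_sub_natCast _ (N ^ j * k)]
  congr 1
  push_cast
  ring

lemma norm_sub_le_one_of_norm_le_one {S : Type*} [SeminormedAddGroup S] [IsUltrametricDist S]
    {a b : S} (ha : ‖a‖ ≤ 1) (hb : ‖b‖ ≤ 1) : ‖a - b‖ ≤ 1 := by
  rw [sub_eq_add_neg]
  exact (IsUltrametricDist.norm_add_le_max a (-b)).trans (max_le ha (by rwa [norm_neg]))

lemma not_dvd_den_of_norm_le_one (p : ℕ) [Fact p.Prime] {q : ℚ} (h : ‖(q : ℚ_[p])‖ ≤ 1) :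
    ¬p ∣ q.den :=
  Rat.padicValuation_le_one_iff.1 ((Padic.norm_rat_le_one_iff_padicValuation_le_one p).1 h)

def digitValue (N n : ℕ) (i : ℕ → ℕ) : ℝ :=
  ∑ j ∈ Finset.range (n + 1), (i j : ℝ) / (N : ℝ) ^ (j + 1)

def digitCylinder (N n : ℕ) (i : ℕ → ℕ) : Set ℝ :=
  Ico (digitValue N n i) (digitValue N n i + 1 / (N : ℝ) ^ (n + 1))

section Digits

variable {N n : ℕ} {i : ℕ → ℕ}

lemma digitValue_succ :
    digitValue N (n + 1) i = (i 0 + digitValue N n (fun j ↦ i (j + 1))) / N := by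
  simp only [digitValue]
  rw [Finset.sum_range_succ', add_div, Finset.sum_div, add_comm]
  simp only [div_div, ← pow_succ, zero_add, pow_one]

lemma digitValue_nonneg : 0 ≤ digitValue N n i := by
  unfold digitValue
  positivity

lemma mem_digitCylinder_succ (hN : 0 < N) {x : ℝ} :
    x ∈ digitCylinder N (n + 1) i ↔ N * x - i 0 ∈ digitCylinder N n (fun j ↦ i (j + 1)) := by
  rw [digitCylinder, digitCylinder, mem_Ico_mul_sub_iff (by exact_mod_cast hN), digitValue_succ]
  congr! 2
  field_simp
  ring

lemma digitCylinder_subset_Ico (hN : 0 < N) (hi : ∀ j ≤ n, i j < N) :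
    digitCylinder N n i ⊆ Ico 0 1 := by
  refine Ico_subset_Ico digitValue_nonneg ?_
  induction n generalizing i with
  | zero =>
    have : (i 0 : ℝ) + 1 ≤ N := by exact_mod_cast hi 0 le_rfl
    rw [digitValue, Finset.sum_range_one, zero_add, pow_one, ← add_div,
      div_le_one (by exact_mod_cast hN)]
    simpa using this
  | succ n ih =>
    have h₀ : (i 0 : ℝ) + 1 ≤ N := by exact_mod_cast hi 0 n.succ.zero_le
    have hrest := ih (i := fun j ↦ i (j + 1)) fun j hj ↦ hi (j + 1) (by omega)
    calc digitValue N (n + 1) i + 1 / (N : ℝ) ^ (n + 1 + 1)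
        = (i 0 + (digitValue N n (fun j ↦ i (j + 1)) + 1 / (N : ℝ) ^ (n + 1))) / N := by
          rw [digitValue_succ]; field_simp; ring
      _ ≤ (i 0 + 1) / N := by gcongr
      _ ≤ 1 := (div_le_one (by exact_mod_cast hN)).2 h₀

theorem forall_fract_mem_Ico_iff_mem_digitCylinder (hN : 0 < N) (hi : ∀ j ≤ n, i j < N)
    {x : ℝ} (hx : x ∈ Ico 0 1) :
    (∀ j ≤ n, Int.fract ((N : ℝ) ^ j * x) ∈ Ico ((i j : ℝ) / N) (((i j : ℝ) + 1) / N)) ↔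
      x ∈ digitCylinder N n i := by
  induction n generalizing i x with
  | zero => simp [digitCylinder, digitValue, Int.fract_eq_self.2 hx, add_div]
  | succ n ih =>
    have hi' : ∀ j ≤ n, i (j + 1) < N := fun j hj ↦ hi (j + 1) (by omega)
    have hy : N * x - i 0 ∈ Ico 0 1 ↔ x ∈ Ico ((i 0 : ℝ) / N) (((i 0 : ℝ) + 1) / N) := by
      simpa using mem_Ico_mul_sub_iff (by exact_mod_cast hN : (0 : ℝ) < N) (i 0) 0 1 x
    simp only [Nat.forall_le_succ_left, fract_pow_succ_mul N _ (i 0), pow_zero, one_mul,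
      Int.fract_eq_self.2 hx, mem_digitCylinder_succ hN]
    constructor
    · rintro ⟨h₀, hrest⟩
      exact (ih hi' (hy.2 h₀)).1 hrest
    · intro hcyl
      have hy₀ := digitCylinder_subset_Ico hN hi' hcyl
      exact ⟨hy.1 hy₀, (ih hi' hy₀).2 hcyl⟩

end Digits

lemma den_eq_one_of_mem_zInv6 {q : ℚ} (hq : q ∈ zInv6) (h₂ : ‖(q : ℚ_[2])‖ ≤ 1)
    (h₃ : ‖(q : ℚ_[3])‖ ≤ 1) : q.den = 1 := by
  obtain ⟨z, k, rfl⟩ := hq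
  have hdvd : ((z : ℚ) / 6 ^ k).den ∣ 6 ^ k := by
    have := Rat.den_dvd z (6 ^ k)
    rw [Rat.divInt_eq_div] at this
    exact_mod_cast this
  have hcop₂ := (Nat.Prime.coprime_iff_not_dvd Nat.prime_two).2 (not_dvd_den_of_norm_le_one 2 h₂)
  have hcop₃ := (Nat.Prime.coprime_iff_not_dvd Nat.prime_three).2 (not_dvd_den_of_norm_le_one 3 h₃)
  exact ((Nat.Coprime.mul_left hcop₂ hcop₃).pow_left k).symm.eq_one_of_dvd hdvd

lemma fst_eq_fract_of_sub_mem_Γ {y z : G} (hy₂ : ‖y.2.1‖ ≤ 1) (hy₃ : ‖y.2.2‖ ≤ 1) (hz : z ∈ F)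
    (h : y - z ∈ Γ) : z.1 = Int.fract y.1 := by
  obtain ⟨q, hq, hqyz⟩ := h
  have hden : q.den = 1 := by
    refine den_eq_one_of_mem_zInv6 hq ?_ ?_
    · rw [show (q : ℚ_[2]) = y.2.1 - z.2.1 from congrArg (·.2.1) hqyz]
      exact norm_sub_le_one_of_norm_le_one hy₂ hz.2.1
    · rw [show (q : ℚ_[3]) = y.2.2 - z.2.2 from congrArg (·.2.2) hqyz]
      exact norm_sub_le_one_of_norm_le_one hy₃ hz.2.2
  obtain ⟨m, rfl⟩ : ∃ m : ℤ, (m : ℚ) = q := ⟨q.num, Rat.coe_int_num_of_den_eq_one hden⟩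
  refine (Int.fract_eq_iff.2 ⟨hz.1.1, hz.1.2, m, ?_⟩).symm
  rw [← Prod.fst_sub, ← hqyz, Δ, Rat.cast_intCast]

lemma rep_act_natCast_fst (rep : G → G) (hrep : ∀ x : G, rep x ∈ F ∧ x - rep x ∈ Γ) (k : ℕ)
    {x : G} (hx₂ : ‖x.2.1‖ ≤ 1) (hx₃ : ‖x.2.2‖ ≤ 1) :
    (rep (act k x)).1 = Int.fract (k * x.1) := by
  have hk (p : ℕ) [Fact p.Prime] {t : ℚ_[p]} (ht : ‖t‖ ≤ 1) : ‖((k : ℚ) : ℚ_[p]) * t‖ ≤ 1 := by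
    rw [norm_mul, Rat.cast_natCast]
    exact mul_le_one₀ (IsUltrametricDist.norm_natCast_le_one _ k) (norm_nonneg _) ht
  simpa [act] using fst_eq_fract_of_sub_mem_Γ (hk 2 hx₂) (hk 3 hx₃) (hrep _).1 (hrep _).2

theorem backward_atom_general (rep : G → G) (hrep : ∀ x : G, rep x ∈ F ∧ x - rep x ∈ Γ)
    (N : ℕ) (n : ℕ) (i : ℕ → ℕ) (hi : ∀ j ≤ n, i j < N) :
    {x : G | x ∈ F ∧ ∀ j ≤ n, rep (act ((N : ℚ) ^ j) x) ∈ A N (i j)} =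
      {x : G | x.1 ∈ Set.Ico (∑ j ∈ Finset.range (n + 1), (i j : ℝ) / (N : ℝ) ^ (j + 1))
          ((∑ j ∈ Finset.range (n + 1), (i j : ℝ) / (N : ℝ) ^ (j + 1)) + 1 / (N : ℝ) ^ (n + 1)) ∧
        ‖x.2.1‖ ≤ 1 ∧ ‖x.2.2‖ ≤ 1} := by
  have hN : 0 < N := (hi 0 n.zero_le).pos
  have hfst {x : G} (hx₂ : ‖x.2.1‖ ≤ 1) (hx₃ : ‖x.2.2‖ ≤ 1) (j : ℕ) :
      (rep (act ((N : ℚ) ^ j) x)).1 = Int.fract ((N : ℝ) ^ j * x.1) := by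
    simpa using rep_act_natCast_fst rep hrep (N ^ j) hx₂ hx₃
  ext x
  change x ∈ F ∧ _ ↔ x.1 ∈ digitCylinder N n i ∧ _
  constructor
  · rintro ⟨hxF, hx⟩
    refine ⟨(forall_fract_mem_Ico_iff_mem_digitCylinder hN hi hxF.1).1 fun j hj ↦ ?_, hxF.2⟩
    rw [← hfst hxF.2.1 hxF.2.2]
    exact (hx j hj).1
  · rintro ⟨hx₁, hx₂, hx₃⟩
    refine ⟨⟨digitCylinder_subset_Ico hN hi hx₁, hx₂, hx₃⟩, fun j hj ↦ ⟨?_, (hrep _).1.2⟩⟩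
    rw [hfst hx₂ hx₃]
    exact (forall_fract_mem_Ico_iff_mem_digitCylinder hN hi
      (digitCylinder_subset_Ico hN hi hx₁)).2 hx₁ j hj

/-- A backward atom `⋂_{j=0}^n α^{-j}(A_{i_j})` is a single rectangle
`[D, D+1/N^{n+1}) × ℤ₂ × ℤ₃` with `D = Σ_{j=0}^n i_j/N^{j+1}`. -/
theorem backward_atom (rep : G → G) (hrep : ∀ x : G, rep x ∈ F ∧ x - rep x ∈ Γ)
    (a b : ℕ) (ha : 1 ≤ a) (hb : 1 ≤ b) (N : ℕ) (hN : N = 2 ^ a * 3 ^ b)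
    (n : ℕ) (hn : 1 ≤ n) (i : ℕ → ℕ) (hi : ∀ j ≤ n, i j < N) :
    {x : G | x ∈ F ∧ ∀ j ≤ n, rep (act ((N : ℚ) ^ j) x) ∈ A N (i j)} =
      {x : G | x.1 ∈ Set.Ico (∑ j ∈ Finset.range (n + 1), (i j : ℝ) / (N : ℝ) ^ (j + 1))
          ((∑ j ∈ Finset.range (n + 1), (i j : ℝ) / (N : ℝ) ^ (j + 1)) + 1 / (N : ℝ) ^ (n + 1)) ∧
        ‖x.2.1‖ ≤ 1 ∧ ‖x.2.2‖ ≤ 1} :=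
  backward_atom_general rep hrep N n i hi
end
end
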